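/- The rule-based MI-inconsistency measure I^RB_MI, defined as the number of minimal inconsistent subsets containing no complementary pair of facts, satisfies Rule Consistency: I^RB_MI(B) = 0 iff R(B) ∪ F' is consistent for all consistent subsets F' ⊆ F(B). -/

import Mathlib

open scoped Classical

/-- A rule over atoms `A`: literals are pairs (atom, sign). -/
structure Rule (A : Type*) where
  body : Finset (A × Bool)
  head : A × Bool
deriving DecidableEq

abbrev RuleBase (A : Type*) := Finset (Rule A)

variable {A : Type*}

/-- The complement of a literal. -/
def litCompl (l : A × Bool) : A × Bool := (l.1, !l.2)

/-- The fact with head `l` (empty body). -/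
def factR (l : A × Bool) : Rule A := ⟨∅, l⟩

/-- The facts (empty-body rules) of a rule base. -/
noncomputable def facts [DecidableEq A] (B : RuleBase A) : RuleBase A :=
  B.filter (fun r => r.body = ∅)

/-- The proper (non-fact) rules of a rule base. -/
noncomputable def properRules [DecidableEq A] (B : RuleBase A) : RuleBase A :=
  B.filter (fun r => r.body ≠ ∅)

/-- A set of literals is closed w.r.t. a rule base. -/
def Closed (B : RuleBase A) (M : Set (A × Bool)) : Prop :=
  ∀ r ∈ B, (↑r.body ⊆ M) → r.head ∈ M

/-- The minimal model: the smallest closed set of literals. -/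
def minModel (B : RuleBase A) : Set (A × Bool) :=
  {l | ∀ M : Set (A × Bool), Closed B M → l ∈ M}

/-- A set of literals is consistent if it contains no complementary pair. -/
def ConsistentLits (M : Set (A × Bool)) : Prop :=
  ¬ ∃ a : A, (a, true) ∈ M ∧ (a, false) ∈ M

/-- A rule base is consistent if its minimal model is consistent. -/
def Consistent (B : RuleBase A) : Prop := ConsistentLits (minModel B)

/-- The minimal inconsistent subsets of a rule base. -/
def MI (B : RuleBase A) : Set (RuleBase A) :=
  { M | M ⊆ B ∧ ¬ Consistent M ∧ ∀ M' ⊂ M, Consistent M' }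

/-- `M` contains a complementary pair of facts. -/
def hasComplFactPair (M : RuleBase A) : Prop :=
  ∃ a : A, factR (a, true) ∈ M ∧ factR (a, false) ∈ M

/-- Minimal inconsistent subsets containing no complementary pair of facts. -/
def MIF (B : RuleBase A) : Set (RuleBase A) :=
  { M ∈ MI B | ¬ hasComplFactPair M }

/-- A formula is free in a rule base if it belongs to no minimal inconsistent subset. -/
def Free (r : Rule A) (B : RuleBase A) : Prop := ∀ M ∈ MI B, r ∉ M

/-- Rule consistency: the rules together with any consistent set of facts are consistent. -/
def RuleConsistent [DecidableEq A] (B : RuleBase A) : Prop :=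
  ∀ F' ⊆ facts B, Consistent F' → Consistent (properRules B ∪ F')

/-- The drastic inconsistency measure. -/
noncomputable def Idr (B : RuleBase A) : ℕ := if Consistent B then 0 else 1

/-- The rule-based drastic inconsistency measure. -/
noncomputable def IRBd (B : RuleBase A) : ℕ := if MIF B = ∅ then 0 else 1

/-- The rule-based MI-inconsistency measure. -/
noncomputable def IRBMI (B : RuleBase A) : ℕ := (MIF B).ncard

/-- The rule-based problematic inconsistency measure: number of distinct
    non-fact rules occurring in some element of `MIF B`. -/
noncomputable def IRBp (B : RuleBase A) : ℕ :=
  {r : Rule A | r.body ≠ ∅ ∧ ∃ M ∈ MIF B, r ∈ M}.ncard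

/-- Three truth values. -/
inductive TV | t | b | f
deriving DecidableEq

def TV.negv : TV → TV
  | .t => .f
  | .f => .t
  | .b => .b

/-- Value of a literal under a three-valued interpretation. -/
def litVal (v : A → TV) (l : A × Bool) : TV :=
  if l.2 then v l.1 else (v l.1).negv

/-- Designated truth values. -/
def TV.des : TV → Prop
  | .f => False
  | _ => True

/-- Three-valued satisfaction of a rule. -/
def sat3 (v : A → TV) (r : Rule A) : Prop :=
  (∀ l ∈ r.body, (litVal v l).des) → (litVal v r.head).des

/-- The rule-based contension inconsistency measure. -/
noncomputable def IRBc (B : RuleBase A) : ℕ :=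
  sInf { n : ℕ | ∃ v : A → TV,
    (∀ M ∈ MIF B, ∀ r ∈ M, sat3 v r) ∧ n = {a : A | v a = TV.b}.ncard }

/-- The payoff of `α` in coalition `C` (w.r.t. rule base `B` and measure `I`). -/
noncomputable def CoalPayoff [DecidableEq A] (I : RuleBase A → ℝ) (B : RuleBase A)
    (α : Rule A) (C : RuleBase A) : ℝ :=
  ((Nat.factorial (C.card - 1) * Nat.factorial (B.card - C.card) : ℕ) : ℝ)
    / ((Nat.factorial B.card : ℕ) : ℝ) * (I C - I (C.erase α))

/-- The additional payoff shifted from facts to non-free rules. -/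
noncomputable def AddPayoff [DecidableEq A] (I : RuleBase A → ℝ) (B : RuleBase A)
    (r : Rule A) (C : RuleBase A) : ℝ :=
  if Free r C then 0
  else (∑ f ∈ C.filter (fun x => x.body = ∅), CoalPayoff I B f C)
        / ((C.filter (fun x => x.body ≠ ∅ ∧ ¬ Free x C)).card : ℝ)

/-- The adjusted Shapley inconsistency value. -/
noncomputable def Sstar [DecidableEq A] (I : RuleBase A → ℝ) (B : RuleBase A)
    (α : Rule A) : ℝ :=
  if α.body = ∅ then 0
  else ∑ C ∈ B.powerset, (CoalPayoff I B α C + AddPayoff I B α C)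

/-! A minimal inconsistent subset `M` without complementary facts would refute rule consistency:
its facts form a consistent fact base, and together with the proper rules they cover `M`.
Conversely, if some consistent `F'` makes `properRules B ∪ F'` inconsistent, a minimal
inconsistent subset of it takes its facts from `F'`, so it has no complementary pair. -/

lemma minModel_subset_of_closed {B : RuleBase A} {M : Set (A × Bool)} (hM : Closed B M) :
    minModel B ⊆ M :=
  fun _ hl => hl M hM

lemma minModel_mono {B B' : RuleBase A} (h : B ⊆ B') : minModel B ⊆ minModel B' :=
  fun _ hl M hM => hl M fun r hr => hM r (h hr)

lemma Consistent.anti {B B' : RuleBase A} (h : B ⊆ B') (hB' : Consistent B') :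
    Consistent B :=
  fun ⟨a, hpos, hneg⟩ => hB' ⟨a, minModel_mono h hpos, minModel_mono h hneg⟩

lemma mem_minModel_of_factR_mem {B : RuleBase A} {l : A × Bool} (h : factR l ∈ B) :
    l ∈ minModel B :=
  fun M hM => hM _ h (by simp [factR])

lemma not_consistent_of_hasComplFactPair {B : RuleBase A} (h : hasComplFactPair B) :
    ¬ Consistent B :=
  fun hB => have ⟨a, hpos, hneg⟩ := h
    hB ⟨a, mem_minModel_of_factR_mem hpos, mem_minModel_of_factR_mem hneg⟩

lemma Rule.eq_factR_of_body_eq_empty {r : Rule A} (h : r.body = ∅) : r = factR r.head := by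
  cases r
  simp_all [factR]

lemma exists_mem_MI_of_not_consistent {S : RuleBase A} (hS : ¬ Consistent S) :
    ∃ M, M ∈ MI S := by
  obtain ⟨M, hMS, hMinc, hMmin⟩ := exists_minimal_le_of_wellFoundedLT (¬ Consistent ·) S hS
  exact ⟨M, hMS, hMinc, fun M' hM' => by_contra fun h => hM'.not_ge (hMmin h hM'.le)⟩

lemma MI_mono {S B : RuleBase A} (h : S ⊆ B) : MI S ⊆ MI B :=
  fun _ ⟨hMS, hMinc, hMmin⟩ => ⟨hMS.trans h, hMinc, hMmin⟩

lemma MIF_finite (B : RuleBase A) : (MIF B).Finite :=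
  B.powerset.finite_toSet.subset fun _ hM => Finset.mem_powerset.mpr hM.1.1

lemma IRBMI_eq_zero_iff (B : RuleBase A) : IRBMI B = 0 ↔ MIF B = ∅ :=
  Set.ncard_eq_zero (MIF_finite B)

section Decidable

variable [DecidableEq A]

lemma facts_mono {M B : RuleBase A} (h : M ⊆ B) : facts M ⊆ facts B :=
  Finset.filter_subset_filter _ h

lemma subset_properRules_union_facts {M B : RuleBase A} (h : M ⊆ B) :
    M ⊆ properRules B ∪ facts M := by
  intro r hr
  by_cases hb : r.body = ∅
  · exact Finset.mem_union_right _ (Finset.mem_filter.mpr ⟨hr, hb⟩)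
  · exact Finset.mem_union_left _ (Finset.mem_filter.mpr ⟨h hr, hb⟩)

lemma properRules_union_subset {F B : RuleBase A} (hF : F ⊆ facts B) :
    properRules B ∪ F ⊆ B :=
  Finset.union_subset (Finset.filter_subset _ _) (hF.trans (Finset.filter_subset _ _))

lemma factR_mem_of_mem_properRules_union {F B : RuleBase A} {l : A × Bool}
    (h : factR l ∈ properRules B ∪ F) : factR l ∈ F :=
  (Finset.mem_union.mp h).resolve_left fun hp => (Finset.mem_filter.mp hp).2 rfl

/-- The minimal model of `facts M` is contained in the closed set `{l | factR l ∈ M}`. -/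
lemma consistent_facts_of_not_hasComplFactPair {M : RuleBase A} (h : ¬ hasComplFactPair M) :
    Consistent (facts M) := by
  have hclosed : Closed (facts M) {l | factR l ∈ M} := fun r hr _ => by
    obtain ⟨hrM, hbody⟩ := Finset.mem_filter.mp hr
    rwa [Rule.eq_factR_of_body_eq_empty hbody] at hrM
  exact fun ⟨a, hpos, hneg⟩ =>
    h ⟨a, minModel_subset_of_closed hclosed hpos, minModel_subset_of_closed hclosed hneg⟩

end Decidable

theorem stmt6 [DecidableEq A] (B : RuleBase A) :
    IRBMI B = 0 ↔ RuleConsistent B := by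
  rw [IRBMI_eq_zero_iff, Set.eq_empty_iff_forall_notMem]
  constructor
  · intro hMIF F' hF' hF'cons
    by_contra hinc
    obtain ⟨M, hM⟩ := exists_mem_MI_of_not_consistent hinc
    have hnoPair : ¬ hasComplFactPair M := fun ⟨a, hpos, hneg⟩ =>
      not_consistent_of_hasComplFactPair
        ⟨a, factR_mem_of_mem_properRules_union (hM.1 hpos),
          factR_mem_of_mem_properRules_union (hM.1 hneg)⟩ hF'cons
    exact hMIF M ⟨MI_mono (properRules_union_subset hF') hM, hnoPair⟩
  · rintro hRC M ⟨⟨hMB, hMinc, -⟩, hnoPair⟩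
    have hcons := hRC (facts M) (facts_mono hMB) (consistent_facts_of_not_hasComplFactPair hnoPair)
    exact hMinc (hcons.anti (subset_properRules_union_facts hMB))
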